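/- arXiv:2311.10023 — 2 statements merged into one kernel-verified Lean document; each statement's English description precedes it below -/
import Mathlib

section
/- For every s ≥ 1, the logarithm of the ratio of consecutive weight sums satisfies the Hoeffding-type bound: log( Σ_{a∈𝒜} w^{s+1}(a) / Σ_{a∈𝒜} w^s(a) ) ≤ −η · Σ_{a∈𝒜} P^s(a) C(a, b_s) + 9η²Θ²/8. -/
open Real MeasureTheory ProbabilityTheory

/-!
Passing from `w^s` to `w^{s+1}` multiplies each weight by `exp (-η C(a, b_s))`, so the ratio of
the weight sums is the expectation of `exp (-η X)` under `P^s`, where `X = C(·, b_s)` takes values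
in `[0, 3Θ]`. Hoeffding's lemma bounds this expectation by `exp (-η E[X] + η² (3Θ)² / 8)`.
-/

theorem sum_mul_exp_mul_le_of_mem_Icc {ι : Type*} [Fintype ι] {p X : ι → ℝ}
    (hp : ∀ i, 0 ≤ p i) (hp1 : ∑ i, p i = 1) {a b : ℝ} (hX : ∀ i, X i ∈ Set.Icc a b) (t : ℝ) :
    ∑ i, p i * exp (t * X i) ≤ exp (t * ∑ i, p i * X i + t ^ 2 * (b - a) ^ 2 / 8) := by
  let _ : MeasurableSpace ι := ⊤
  let μ : PMF ι := PMF.ofFintype (fun i ↦ ENNReal.ofReal (p i)) <| by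
    rw [← ENNReal.ofReal_sum_of_nonneg fun i _ ↦ hp i, hp1, ENNReal.ofReal_one]
  have integral_eq (f : ι → ℝ) : ∫ i, f i ∂μ.toMeasure = ∑ i, p i * f i := by
    simp [μ, PMF.integral_eq_sum, ENNReal.toReal_ofReal (hp _)]
  have hoeffding := (hasSubgaussianMGF_of_mem_Icc (μ := μ.toMeasure)
    (measurable_of_countable X).aemeasurable (ae_of_all _ hX)).mgf_le t
  simp only [mgf, integral_eq] at hoeffding
  set m := ∑ i, p i * X i
  calc ∑ i, p i * exp (t * X i) = exp (t * m) * ∑ i, p i * exp (t * (X i - m)) := by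
        rw [Finset.mul_sum]
        refine Finset.sum_congr rfl fun i _ ↦ ?_
        rw [mul_left_comm, ← exp_add]
        ring_nf
    _ ≤ exp (t * m) * exp (((‖b - a‖₊ / 2) ^ 2 : NNReal) * t ^ 2 / 2) := by gcongr
    _ = exp (t * m + t ^ 2 * (b - a) ^ 2 / 8) := by
        rw [← exp_add]
        congr 1
        push_cast
        rw [Real.norm_eq_abs, div_pow, sq_abs]
        ring

/-- `w s`, `P s` and `b s` are the paper's `w^{s+1}`, `P^{s+1}` and `b_{s+1}`. -/
theorem ew_weight_sum_ratio_hoeffding_general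
    {α β : Type*} [Fintype α] [Nonempty α]
    (b : ℕ → β) (C : α → β → ℝ) (Θ : ℝ)
    (hC : ∀ a x, 0 ≤ C a x ∧ C a x ≤ 3 * Θ)
    (η : ℝ)
    (w : ℕ → α → ℝ)
    (hw : ∀ t a, w t a = Real.exp (-η * ∑ s ∈ Finset.range t, C a (b s)))
    (P : ℕ → α → ℝ)
    (hP : ∀ t a, P t a = w t a / ∑ a' : α, w t a')
    (s : ℕ) :
    Real.log ((∑ a : α, w (s + 1) a) / (∑ a : α, w s a))
      ≤ -η * (∑ a : α, P s a * C a (b s)) + 9 * η ^ 2 * Θ ^ 2 / 8 := by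
  have hw_pos : ∀ a, 0 < w s a := fun a ↦ hw s a ▸ exp_pos _
  have hW_pos : 0 < ∑ a, w s a := Finset.sum_pos (fun a _ ↦ hw_pos a) Finset.univ_nonempty
  have hP_nonneg : ∀ a, 0 ≤ P s a := fun a ↦ hP s a ▸ div_nonneg (hw_pos a).le hW_pos.le
  have hP_sum : ∑ a, P s a = 1 := by simp only [hP, ← Finset.sum_div, div_self hW_pos.ne']
  have ratio_eq : (∑ a, w (s + 1) a) / ∑ a, w s a = ∑ a, P s a * exp (-η * C a (b s)) := by
    simp only [Finset.sum_div, hP]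
    refine Finset.sum_congr rfl fun a _ ↦ ?_
    rw [hw (s + 1), hw s, Finset.sum_range_succ, mul_add, exp_add]
    ring
  have ratio_pos : 0 < ∑ a, P s a * exp (-η * C a (b s)) := ratio_eq ▸ div_pos
    (Finset.sum_pos (fun a _ ↦ hw (s + 1) a ▸ exp_pos _) Finset.univ_nonempty) hW_pos
  rw [ratio_eq, log_le_iff_le_exp ratio_pos]
  convert sum_mul_exp_mul_le_of_mem_Icc hP_nonneg hP_sum (fun a ↦ hC a (b s)) (-η) using 2
  ring

/-- For every step `s ≥ 1`, the Hoeffding-type bound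
`log(Σ_a w^{s+1}(a) / Σ_a w^s(a)) ≤ −η·Σ_a P^s(a)·C(a,b_s) + 9η²Θ²/8` holds.
Here `w s` denotes the paper's `w^{s+1}` (so `w 0` is the paper's `w^1`),
`P s` the paper's `P^{s+1}`, and `b s` the paper's `b_{s+1}`; the index
`s : ℕ` thus ranges over all paper steps `s ≥ 1`. -/
theorem ew_weight_sum_ratio_hoeffding
    {α β : Type*} [Fintype α] [Nonempty α]
    (b : ℕ → β) (C : α → β → ℝ) (Θ : ℝ) (hΘ : 0 < Θ)
    (hC : ∀ a x, 0 ≤ C a x ∧ C a x ≤ 3 * Θ)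
    (η : ℝ) (hη : 0 < η)
    (w : ℕ → α → ℝ)
    (hw : ∀ t a, w t a = Real.exp (-η * ∑ s ∈ Finset.range t, C a (b s)))
    (P : ℕ → α → ℝ)
    (hP : ∀ t a, P t a = w t a / ∑ a' : α, w t a')
    (s : ℕ) :
    Real.log ((∑ a : α, w (s + 1) a) / (∑ a : α, w s a))
      ≤ -η * (∑ a : α, P s a * C a (b s)) + 9 * η ^ 2 * Θ ^ 2 / 8 :=
  ew_weight_sum_ratio_hoeffding_general b C Θ hC η w hw P hP s
end

section
/- Suppose |𝒜| ≥ 2, T ≥ 1, and set η = √(log|𝒜| / T). Let (Ω, ℱ, μ) be a probability space and let A_1, …, A_T : Ω → 𝒜 be independent random variables such that the law of A_t is P^t for each t, and define the regret R_T = Σ_{t=1}^T C(A_t, b_t) − min_{a∈𝒜} Σ_{t=1}^T C(a, b_t). Then for every 0 < δ < 1, with probability at least 1 − δ, R_T ≤ (9Θ²/8 + 1)·√(T·log|𝒜|) + 3Θ·√( (1/2)·log(1/δ)·T ). -/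
/-!
The expected regret is bounded deterministically by the potential argument for exponential
weights: by Hoeffding's lemma the total weight `W_t = ∑ₐ w^t(a)` satisfies
`W_{t+1} ≤ W_t · exp (-η m_t + η² (3Θ)² / 8)`, where `m_t` is the expected loss under `P^t`.
Since `W_1 = |𝒜|` and `W_{T+1} ≥ w^{T+1}(a)` for every `a`, taking logarithms gives
`∑ m_t ≤ minₐ ∑ C(a, b_t) + log |𝒜| / η + η T (3Θ)² / 8`, which at the tuned `η` is the first
term of the bound. The realized loss `∑ C(A_t, b_t)` is a sum of independent `[0, 3Θ]`-valued
variables with means `m_t`, so by Hoeffding's inequality it exceeds `∑ m_t` by more than the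
second term with probability at most `δ`.
-/

open Finset MeasureTheory ProbabilityTheory Real

theorem sum_mul_exp_le_of_mem_Icc {ι : Type*} [Fintype ι] {p f : ι → ℝ} (hp : ∀ i, 0 ≤ p i)
    (hp1 : ∑ i, p i = 1) {lo hi : ℝ} (hf : ∀ i, f i ∈ Set.Icc lo hi) (s : ℝ) :
    ∑ i, p i * exp (s * f i) ≤ exp (s * ∑ i, p i * f i + s ^ 2 * (hi - lo) ^ 2 / 8) := by
  let _ : MeasurableSpace ι := ⊤
  -- Hoeffding's lemma for the discrete law `∑ i, p i • δ_i`.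
  let ν : Measure ι := ∑ i, ENNReal.ofReal (p i) • Measure.dirac i
  have hν : ∀ g : ι → ℝ, ∫ i, g i ∂ν = ∑ i, p i * g i := by
    intro g
    rw [integral_finsetSum_measure fun i _ =>
      (integrable_dirac enorm_lt_top).smul_measure ENNReal.ofReal_ne_top]
    simp [integral_smul_measure, hp]
  have : IsProbabilityMeasure ν := ⟨by
    simp [ν, ← ENNReal.ofReal_sum_of_nonneg fun i _ => hp i, hp1]⟩
  have hoeffding := (hasSubgaussianMGF_of_mem_Icc (μ := ν) (X := f)
    (measurable_of_countable f).aemeasurable (ae_of_all _ hf)).mgf_le s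
  set m := ∑ i, p i * f i
  have hcenter : ∑ i, p i * exp (s * (f i - m)) = exp (-(s * m)) * ∑ i, p i * exp (s * f i) := by
    rw [Finset.mul_sum]
    congr 1 with i
    rw [mul_sub, sub_eq_add_neg, exp_add]
    ring
  rw [mgf, hν, hν, hcenter, ← le_div_iff₀' (exp_pos _), div_eq_mul_inv, ← exp_neg, neg_neg,
    ← exp_add] at hoeffding
  refine hoeffding.trans_eq (congrArg exp ?_)
  push_cast
  rw [Real.norm_eq_abs, div_pow, sq_abs]
  ring

theorem measureReal_sum_sub_integral_ge_le_of_iIndepFun {ι Ω : Type*} [Fintype ι]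
    [MeasurableSpace Ω] {μ : Measure Ω} [IsProbabilityMeasure μ] {Y : ι → Ω → ℝ}
    (hmeas : ∀ i, Measurable (Y i)) (hindep : iIndepFun Y μ) {lo hi : ℝ}
    (hY : ∀ i ω, Y i ω ∈ Set.Icc lo hi) {ε : ℝ} (hε : 0 ≤ ε) :
    μ.real {ω | ε ≤ ∑ i, (Y i ω - μ[Y i])} ≤
      exp (-2 * ε ^ 2 / (Fintype.card ι * (hi - lo) ^ 2)) := by
  have hsubG : ∀ i ∈ (univ : Finset ι),
      HasSubgaussianMGF (fun ω => Y i ω - μ[Y i]) ((‖hi - lo‖₊ / 2) ^ 2) μ :=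
    fun i _ => hasSubgaussianMGF_of_mem_Icc (hmeas i).aemeasurable (ae_of_all _ (hY i))
  have hcentered : iIndepFun (fun i ω => Y i ω - μ[Y i]) μ :=
    hindep.comp (fun (i : ι) (x : ℝ) => x - ∫ ω, Y i ω ∂μ) fun _ => measurable_sub_const _
  refine (HasSubgaussianMGF.measure_sum_ge_le_of_iIndepFun hcentered hsubG hε).trans_eq
    (congrArg exp ?_)
  push_cast
  rw [sum_const, card_univ, nsmul_eq_mul, Real.norm_eq_abs, div_pow, sq_abs,
    show (2 : ℝ) * (Fintype.card ι * ((hi - lo) ^ 2 / 2 ^ 2)) = Fintype.card ι * (hi - lo) ^ 2 / 2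
      by ring, div_div_eq_mul_div]
  ring

theorem one_sub_ofReal_le_measure_of_compl_subset {Ω : Type*} [MeasurableSpace Ω]
    {μ : Measure Ω} [IsProbabilityMeasure μ] {E F : Set Ω} {δ : ℝ} (hE : μ.real E ≤ δ)
    (hF : Eᶜ ⊆ F) : 1 - ENNReal.ofReal δ ≤ μ F := by
  have hEδ : μ E ≤ ENNReal.ofReal δ :=
    (ENNReal.le_ofReal_iff_toReal_le (measure_ne_top μ E) (measureReal_nonneg.trans hE)).2 hE
  rw [tsub_le_iff_right]
  calc (1 : ENNReal) = μ (Eᶜ ∪ E) := by rw [Set.compl_union_self, measure_univ]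
    _ ≤ μ Eᶜ + μ E := measure_union_le _ _
    _ ≤ μ F + ENNReal.ofReal δ := add_le_add (measure_mono hF) hEδ

theorem integral_comp_eq_sum_of_measure_preimage {α Ω : Type*} [Fintype α] [MeasurableSpace α]
    [MeasurableSingletonClass α] [MeasurableSpace Ω] {μ : Measure Ω} [IsProbabilityMeasure μ]
    {A : Ω → α} (hA : Measurable A) {p : α → ℝ} (hp : ∀ a, 0 ≤ p a)
    (hlaw : ∀ a, μ (A ⁻¹' {a}) = ENNReal.ofReal (p a)) (g : α → ℝ) :
    ∫ ω, g (A ω) ∂μ = ∑ a, p a * g a := by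
  have : IsProbabilityMeasure (μ.map A) := Measure.isProbabilityMeasure_map hA.aemeasurable
  rw [← integral_map hA.aemeasurable (measurable_of_countable g).aestronglyMeasurable,
    integral_fintype .of_finite]
  refine sum_congr rfl fun a _ => ?_
  rw [measureReal_def, Measure.map_apply hA (measurableSet_singleton a), hlaw,
    ENNReal.toReal_ofReal (hp a), smul_eq_mul]

theorem div_add_mul_eq_of_eq_sqrt {L n η : ℝ} (hL : 0 < L) (hn : 0 < n) (hη : η = √(L / n))
    (c : ℝ) : L / η + η * n * c / 8 = (c / 8 + 1) * √(n * L) := by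
  have hsL : √L ^ 2 = L := sq_sqrt hL.le
  have hsn : √n ^ 2 = n := sq_sqrt hn.le
  have : 0 < √L := sqrt_pos.2 hL
  have : 0 < √n := sqrt_pos.2 hn
  rw [hη, sqrt_div hL.le, sqrt_mul hn.le]
  field_simp
  linear_combination (-8 * √n ^ 2) * hsL - c * √L ^ 2 * hsn

noncomputable section ExponentialWeights

variable {α : Type*} (η : ℝ) (ℓ : ℕ → α → ℝ)

def ewWeight (t : ℕ) (a : α) : ℝ := exp (-η * ∑ s ∈ range t, ℓ s a)

theorem ewWeight_pos (t : ℕ) (a : α) : 0 < ewWeight η ℓ t a := exp_pos _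

variable [Fintype α]

def ewDist (t : ℕ) (a : α) : ℝ := ewWeight η ℓ t a / ∑ a', ewWeight η ℓ t a'

def ewExpectedLoss (t : ℕ) : ℝ := ∑ a, ewDist η ℓ t a * ℓ t a

theorem sum_ewWeight_zero : ∑ a, ewWeight η ℓ 0 a = Fintype.card α := by
  simp [ewWeight]

variable [Nonempty α]

theorem sum_ewWeight_pos (t : ℕ) : 0 < ∑ a, ewWeight η ℓ t a :=
  sum_pos (fun a _ => ewWeight_pos η ℓ t a) univ_nonempty

theorem ewDist_nonneg (t : ℕ) (a : α) : 0 ≤ ewDist η ℓ t a :=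
  div_nonneg (ewWeight_pos η ℓ t a).le (sum_ewWeight_pos η ℓ t).le

theorem sum_ewDist (t : ℕ) : ∑ a, ewDist η ℓ t a = 1 := by
  simp only [ewDist]
  rw [← sum_div, div_self (sum_ewWeight_pos η ℓ t).ne']

theorem sum_ewWeight_succ (t : ℕ) :
    ∑ a, ewWeight η ℓ (t + 1) a =
      (∑ a, ewWeight η ℓ t a) * ∑ a, ewDist η ℓ t a * exp (-η * ℓ t a) := by
  rw [mul_sum]
  refine sum_congr rfl fun a _ => ?_
  rw [ewDist, ← mul_assoc, mul_div_cancel₀ _ (sum_ewWeight_pos η ℓ t).ne', ewWeight, ewWeight,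
    sum_range_succ, mul_add, exp_add]

variable {ℓ} {lo hi : ℝ}

theorem sum_ewWeight_succ_le (hℓ : ∀ t a, ℓ t a ∈ Set.Icc lo hi) (t : ℕ) :
    ∑ a, ewWeight η ℓ (t + 1) a ≤
      (∑ a, ewWeight η ℓ t a) * exp (-η * ewExpectedLoss η ℓ t + η ^ 2 * (hi - lo) ^ 2 / 8) := by
  rw [sum_ewWeight_succ]
  refine mul_le_mul_of_nonneg_left ?_ (sum_ewWeight_pos η ℓ t).le
  simpa [neg_sq, ewExpectedLoss] using
    sum_mul_exp_le_of_mem_Icc (ewDist_nonneg η ℓ t) (sum_ewDist η ℓ t) (hℓ t) (-η)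

theorem sum_ewWeight_le (hℓ : ∀ t a, ℓ t a ∈ Set.Icc lo hi) (n : ℕ) :
    ∑ a, ewWeight η ℓ n a ≤ Fintype.card α *
      exp (-η * ∑ t ∈ range n, ewExpectedLoss η ℓ t + n * (η ^ 2 * (hi - lo) ^ 2 / 8)) := by
  induction n with
  | zero => simp [sum_ewWeight_zero]
  | succ n ih =>
    calc ∑ a, ewWeight η ℓ (n + 1) a
        ≤ (∑ a, ewWeight η ℓ n a) *
            exp (-η * ewExpectedLoss η ℓ n + η ^ 2 * (hi - lo) ^ 2 / 8) :=
          sum_ewWeight_succ_le η hℓ n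
      _ ≤ _ := mul_le_mul_of_nonneg_right ih (exp_pos _).le
      _ = _ := by
        rw [mul_assoc, ← exp_add, sum_range_succ]
        push_cast
        ring_nf

theorem sum_ewExpectedLoss_le (hℓ : ∀ t a, ℓ t a ∈ Set.Icc lo hi) (hη : 0 < η) (n : ℕ)
    (a : α) :
    ∑ t ∈ range n, ewExpectedLoss η ℓ t ≤
      ∑ t ∈ range n, ℓ t a + log (Fintype.card α) / η + η * n * (hi - lo) ^ 2 / 8 := by
  have hweight : ewWeight η ℓ n a ≤ Fintype.card α *
      exp (-η * ∑ t ∈ range n, ewExpectedLoss η ℓ t + n * (η ^ 2 * (hi - lo) ^ 2 / 8)) :=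
    (single_le_sum (fun a _ => (ewWeight_pos η ℓ n a).le) (mem_univ a)).trans
      (sum_ewWeight_le η hℓ n)
  have hlog := log_le_log (ewWeight_pos η ℓ n a) hweight
  rw [ewWeight, log_exp, log_mul (by positivity) (exp_pos _).ne', log_exp] at hlog
  rw [← mul_le_mul_iff_right₀ hη, mul_add, mul_add, mul_div_cancel₀ _ hη.ne']
  linarith

theorem sum_ewExpectedLoss_le_of_eq_sqrt (hℓ : ∀ t a, ℓ t a ∈ Set.Icc lo hi)
    (hcard : 2 ≤ Fintype.card α) {n : ℕ} (hn : 1 ≤ n)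
    (hη : η = √(log (Fintype.card α) / n)) (a : α) :
    ∑ t ∈ range n, ewExpectedLoss η ℓ t ≤
      ∑ t ∈ range n, ℓ t a + ((hi - lo) ^ 2 / 8 + 1) * √(n * log (Fintype.card α)) := by
  have hlog : 0 < log (Fintype.card α) := log_pos (by exact_mod_cast hcard)
  have hn' : (0 : ℝ) < n := by exact_mod_cast hn
  have hη0 : 0 < η := hη ▸ sqrt_pos.2 (div_pos hlog hn')
  have := sum_ewExpectedLoss_le η hℓ hη0 n a
  rwa [add_assoc, div_add_mul_eq_of_eq_sqrt hlog hn' hη] at this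

end ExponentialWeights

/-- Here `A t`, `b t`, `P t` for `t : Fin T` denote the paper's `A_{t+1}`, `b_{t+1}`, `P^{t+1}`. -/
theorem ew_high_probability_regret_bound_tuned
    {α β : Type*} [Fintype α] [Nonempty α]
    [MeasurableSpace α] [MeasurableSingletonClass α]
    (hcard : 2 ≤ Fintype.card α)
    (b : ℕ → β) (C : α → β → ℝ) (Θ : ℝ) (hΘ : 0 < Θ)
    (hC : ∀ a x, 0 ≤ C a x ∧ C a x ≤ 3 * Θ)
    (T : ℕ) (hT : 1 ≤ T)
    (η : ℝ) (hη : η = Real.sqrt (Real.log (Fintype.card α) / T))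
    (w : ℕ → α → ℝ)
    (hw : ∀ t a, w t a = Real.exp (-η * ∑ s ∈ Finset.range t, C a (b s)))
    (P : ℕ → α → ℝ)
    (hP : ∀ t a, P t a = w t a / ∑ a' : α, w t a')
    {Ω : Type*} [MeasurableSpace Ω] (μ : Measure Ω) [IsProbabilityMeasure μ]
    (A : Fin T → Ω → α)
    (hAmeas : ∀ t, Measurable (A t))
    (hAindep : iIndepFun A μ)
    (hAlaw : ∀ (t : Fin T) (a : α), μ (A t ⁻¹' {a}) = ENNReal.ofReal (P t.val a))
    (R : Ω → ℝ)
    (hR : ∀ ω, R ω = (∑ t : Fin T, C (A t ω) (b t.val))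
        - Finset.univ.inf' Finset.univ_nonempty
            (fun a : α => ∑ t : Fin T, C a (b t.val)))
    (δ : ℝ) (hδ0 : 0 < δ) (hδ1 : δ < 1) :
    1 - ENNReal.ofReal δ ≤
      μ {ω | R ω ≤ (9 * Θ ^ 2 / 8 + 1) * Real.sqrt (T * Real.log (Fintype.card α))
              + 3 * Θ * Real.sqrt ((1 / 2) * Real.log (1 / δ) * T)} := by
  set ℓ : ℕ → α → ℝ := fun t a => C a (b t)
  have hℓ : ∀ t a, ℓ t a ∈ Set.Icc 0 (3 * Θ) := fun t a => hC a (b t)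
  have hPew : P = ewDist η ℓ := by
    funext t a
    simp only [hP, hw, ewDist, ewWeight, ℓ]
  subst hPew
  have hmean : ∀ t : Fin T, μ[fun ω => ℓ t (A t ω)] = ewExpectedLoss η ℓ t := fun t =>
    integral_comp_eq_sum_of_measure_preimage (hAmeas t) (ewDist_nonneg η ℓ t) (hAlaw t) (ℓ t)
  obtain ⟨a₀, -, ha₀⟩ := exists_mem_eq_inf' univ_nonempty fun a : α => ∑ t : Fin T, C a (b t)
  have hregret := sum_ewExpectedLoss_le_of_eq_sqrt η hℓ hcard hT hη a₀
  rw [← Fin.sum_univ_eq_sum_range, ← Fin.sum_univ_eq_sum_range] at hregret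
  set ε := 3 * Θ * √((1 / 2) * log (1 / δ) * T)
  have htail := measureReal_sum_sub_integral_ge_le_of_iIndepFun
    (Y := fun (t : Fin T) ω => ℓ t (A t ω))
    (fun t => (measurable_of_countable (ℓ t)).comp (hAmeas t))
    (hAindep.comp (fun t => ℓ t) fun t => measurable_of_countable (ℓ t))
    (fun t ω => hℓ t (A t ω)) (show 0 ≤ ε by positivity)
  have hδ : exp (-2 * ε ^ 2 / (Fintype.card (Fin T) * (3 * Θ - 0) ^ 2)) = δ := by
    have hlog : 0 ≤ log (1 / δ) := log_nonneg ((one_le_div hδ0).2 hδ1.le)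
    have hε : ε ^ 2 = (3 * Θ) ^ 2 * ((1 / 2) * log (1 / δ) * T) := by
      rw [mul_pow, sq_sqrt (by positivity)]
    calc _ = exp (log δ) := by
          rw [hε, Fintype.card_fin, sub_zero, one_div δ, log_inv]
          field_simp
      _ = δ := exp_log hδ0
  refine one_sub_ofReal_le_measure_of_compl_subset (htail.trans_eq hδ) fun ω hω => ?_
  simp only [Set.mem_compl_iff, Set.mem_ofPred_eq, not_le, hmean, sum_sub_distrib] at hω
  simp only [Set.mem_ofPred_eq, hR, ha₀]
  simp only [ℓ] at hω hregret
  linarith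
end
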